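/- arXiv:1807.11088 — 6 statements merged into one kernel-verified Lean document; each statement's English description precedes it below -/
import Mathlib

section
/- Let f = a_0 x^d + a_1 x^{d-1} + ... + a_d ∈ ℚ[x] with d ≥ 1. Then for 0 ≤ i, j ≤ d-1, the coefficient of x^i y^j in δ(1) equals a_{d-1-i-j} when i + j ≤ d - 1 and equals 0 when i + j > d - 1; and the coefficient of x^i y^j in δ(x) equals -a_d when i = j = 0, equals a_{d-i-j} when i ≥ 1, j ≥ 1 and i + j ≤ d, and equals 0 otherwise. -/
open Polynomial Finset

private lemma bez_key1 {A : Type*} [CommRing A] (x y : A) (m : ℕ) :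
    (x - y) * ∑ t ∈ range m, x ^ t * y ^ (m - 1 - t) = x ^ m - y ^ m := by
  rw [mul_comm, geom_sum₂_mul]

private lemma bez_key2 {A : Type*} [CommRing A] (x y : A) (m : ℕ) :
    (x - y) * ∑ t ∈ range m, x ^ (t + 1) * y ^ (m - t)
      = x ^ (m + 1) * y - y ^ (m + 1) * x := by
  have h : ∑ t ∈ range m, x ^ (t + 1) * y ^ (m - t)
      = x * y * ∑ t ∈ range m, x ^ t * y ^ (m - 1 - t) := by
    rw [Finset.mul_sum]
    refine Finset.sum_congr rfl fun t ht => ?_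
    rw [Finset.mem_range] at ht
    rw [show m - t = (m - 1 - t) + 1 by omega, pow_succ, pow_succ]
    ring
  rw [h, show (x - y) * (x * y * ∑ t ∈ range m, x ^ t * y ^ (m - 1 - t))
      = x * y * ((x - y) * ∑ t ∈ range m, x ^ t * y ^ (m - 1 - t)) by ring,
    bez_key1]
  ring

private lemma bez_single_eq (p q i j : ℕ) :
    (Finsupp.single (0 : Fin 2) p + Finsupp.single 1 q
      = Finsupp.single 0 i + Finsupp.single 1 j) ↔ p = i ∧ q = j := by
  constructor
  · intro h
    have h0 := DFunLike.congr_fun h (0 : Fin 2)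
    have h1 := DFunLike.congr_fun h (1 : Fin 2)
    simp [Finsupp.single_apply] at h0 h1
    exact ⟨h0, h1⟩
  · rintro ⟨rfl, rfl⟩; rfl

private lemma bez_single_eq_zero (i j : ℕ) :
    ((0 : Fin 2 →₀ ℕ) = Finsupp.single 0 i + Finsupp.single 1 j) ↔ i = 0 ∧ j = 0 := by
  constructor
  · intro h
    have h0 := DFunLike.congr_fun h (0 : Fin 2)
    have h1 := DFunLike.congr_fun h (1 : Fin 2)
    simp [Finsupp.single_apply] at h0 h1
    exact ⟨h0.symm, h1.symm⟩
  · rintro ⟨rfl, rfl⟩; simp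

private lemma bez_coeff_pow_pow (p q i j : ℕ) :
    MvPolynomial.coeff (Finsupp.single 0 i + Finsupp.single 1 j)
      ((MvPolynomial.X 0 : MvPolynomial (Fin 2) ℚ) ^ p * MvPolynomial.X 1 ^ q)
      = if p = i ∧ q = j then 1 else 0 := by
  rw [MvPolynomial.X_pow_eq_monomial, MvPolynomial.X_pow_eq_monomial,
    MvPolynomial.monomial_mul, MvPolynomial.coeff_monomial, mul_one]
  by_cases h : p = i ∧ q = j
  · rw [if_pos ((bez_single_eq p q i j).mpr h), if_pos h]
  · rw [if_neg (fun he => h ((bez_single_eq p q i j).mp he)), if_neg h]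

/-- Explicit formulas for the coefficients of the Bezout polynomials `δ(1)` and `δ(x)` of
`f = a₀ x^d + a₁ x^{d-1} + ⋯ + a_d`. -/
theorem stmt_6 (d : ℕ) (hd : 1 ≤ d) (a : ℕ → ℚ)
    (f : Polynomial ℚ)
    (hf : f = ∑ k ∈ Finset.range (d + 1), C (a k) * Polynomial.X ^ (d - k))
    (δ1 δx : MvPolynomial (Fin 2) ℚ)
    (hδ1 : (MvPolynomial.X 0 - MvPolynomial.X 1) * δ1 =
      Polynomial.aeval (MvPolynomial.X 0) f - Polynomial.aeval (MvPolynomial.X 1) f)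
    (hδx : (MvPolynomial.X 0 - MvPolynomial.X 1) * δx =
      Polynomial.aeval (MvPolynomial.X 0) f * MvPolynomial.X 1
        - Polynomial.aeval (MvPolynomial.X 1) f * MvPolynomial.X 0) :
    ∀ i j : ℕ, i ≤ d - 1 → j ≤ d - 1 →
      (MvPolynomial.coeff (Finsupp.single 0 i + Finsupp.single 1 j) δ1 =
        if i + j ≤ d - 1 then a (d - 1 - i - j) else 0) ∧
      (MvPolynomial.coeff (Finsupp.single 0 i + Finsupp.single 1 j) δx =
        if i = 0 ∧ j = 0 then -a d
        else if 1 ≤ i ∧ 1 ≤ j ∧ i + j ≤ d then a (d - i - j) else 0) := by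
  have hX : (MvPolynomial.X 0 - MvPolynomial.X 1 : MvPolynomial (Fin 2) ℚ) ≠ 0 := by
    intro h
    have h2 : (MvPolynomial.X 0 : MvPolynomial (Fin 2) ℚ) = MvPolynomial.X 1 :=
      sub_eq_zero.mp h
    have h3 : (0 : Fin 2) = 1 := MvPolynomial.X_injective h2
    simp at h3
  -- explicit candidates
  set D1 : MvPolynomial (Fin 2) ℚ :=
    ∑ k ∈ range (d + 1), MvPolynomial.C (a k) *
      ∑ t ∈ range (d - k), MvPolynomial.X 0 ^ t * MvPolynomial.X 1 ^ (d - k - 1 - t)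
    with hD1def
  set Dx : MvPolynomial (Fin 2) ℚ :=
    MvPolynomial.C (-(a d)) + ∑ k ∈ range d, MvPolynomial.C (a k) *
      ∑ t ∈ range (d - k - 1), MvPolynomial.X 0 ^ (t + 1)
        * MvPolynomial.X 1 ^ (d - k - 1 - t)
    with hDxdef
  have haev : ∀ v : Fin 2, Polynomial.aeval (MvPolynomial.X v : MvPolynomial (Fin 2) ℚ) f
      = ∑ k ∈ range (d + 1), MvPolynomial.C (a k) * MvPolynomial.X v ^ (d - k) := by
    intro v
    rw [hf]
    simp [MvPolynomial.algebraMap_eq]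
  have hid1 : (MvPolynomial.X 0 - MvPolynomial.X 1) * D1
      = Polynomial.aeval (MvPolynomial.X 0) f - Polynomial.aeval (MvPolynomial.X 1) f := by
    rw [haev 0, haev 1, hD1def, Finset.mul_sum, ← Finset.sum_sub_distrib]
    refine Finset.sum_congr rfl fun k _ => ?_
    rw [mul_left_comm, bez_key1]
    ring
  have hidx : (MvPolynomial.X 0 - MvPolynomial.X 1) * Dx
      = Polynomial.aeval (MvPolynomial.X 0) f * MvPolynomial.X 1
        - Polynomial.aeval (MvPolynomial.X 1) f * MvPolynomial.X 0 := by
    rw [haev 0, haev 1, Finset.sum_mul, Finset.sum_mul, ← Finset.sum_sub_distrib,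
      Finset.sum_range_succ, hDxdef, mul_add, Finset.mul_sum, add_comm]
    congr 1
    · refine Finset.sum_congr rfl fun k hk => ?_
      rw [Finset.mem_range] at hk
      rw [mul_left_comm, bez_key2, show d - k - 1 + 1 = d - k by omega]
      ring
    · rw [Nat.sub_self, pow_zero, map_neg]
      ring
  have he1 : δ1 = D1 := mul_left_cancel₀ hX (hδ1.trans hid1.symm)
  have hex : δx = Dx := mul_left_cancel₀ hX (hδx.trans hidx.symm)
  intro i j hi hj
  constructor
  · rw [he1, hD1def]
    simp only [MvPolynomial.coeff_sum, MvPolynomial.coeff_C_mul, bez_coeff_pow_pow,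
      Finset.mul_sum, mul_ite, mul_one, mul_zero]
    by_cases h : i + j ≤ d - 1
    · rw [if_pos h, Finset.sum_eq_single (d - 1 - i - j)]
      · rw [Finset.sum_eq_single i]
        · rw [if_pos ⟨rfl, by omega⟩]
        · intro t ht hne
          rw [if_neg]
          rintro ⟨rfl, -⟩
          exact hne rfl
        · intro hni
          exact absurd (Finset.mem_range.mpr (by omega)) hni
      · intro k hk hne
        rw [Finset.mem_range] at hk
        refine Finset.sum_eq_zero fun t ht => ?_
        rw [Finset.mem_range] at ht
        rw [if_neg]
        rintro ⟨rfl, h2⟩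
        omega
      · intro hni
        exact absurd (Finset.mem_range.mpr (by omega)) hni
    · rw [if_neg h]
      refine Finset.sum_eq_zero fun k hk => Finset.sum_eq_zero fun t ht => ?_
      rw [Finset.mem_range] at hk ht
      rw [if_neg]
      rintro ⟨rfl, h2⟩
      omega
  · rw [hex, hDxdef, MvPolynomial.coeff_add, MvPolynomial.coeff_C]
    simp only [MvPolynomial.coeff_sum, MvPolynomial.coeff_C_mul, bez_coeff_pow_pow,
      Finset.mul_sum, mul_ite, mul_one, mul_zero]
    have hsum : (∑ k ∈ range d, ∑ t ∈ range (d - k - 1),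
        if t + 1 = i ∧ d - k - 1 - t = j then a k else 0)
        = if 1 ≤ i ∧ 1 ≤ j ∧ i + j ≤ d then a (d - i - j) else 0 := by
      by_cases h : 1 ≤ i ∧ 1 ≤ j ∧ i + j ≤ d
      · rw [if_pos h]
        obtain ⟨h1, h2, h3⟩ := h
        rw [Finset.sum_eq_single (d - i - j)]
        · rw [Finset.sum_eq_single (i - 1)]
          · rw [if_pos ⟨by omega, by omega⟩]
          · intro t ht hne
            rw [if_neg]
            rintro ⟨ht1, -⟩
            exact hne (by omega)
          · intro hni
            exact absurd (Finset.mem_range.mpr (by omega)) hni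
        · intro k hk hne
          rw [Finset.mem_range] at hk
          refine Finset.sum_eq_zero fun t ht => ?_
          rw [Finset.mem_range] at ht
          rw [if_neg]
          rintro ⟨ht1, ht2⟩
          omega
        · intro hni
          exact absurd (Finset.mem_range.mpr (by omega)) hni
      · rw [if_neg h]
        refine Finset.sum_eq_zero fun k hk => Finset.sum_eq_zero fun t ht => ?_
        rw [Finset.mem_range] at hk ht
        rw [if_neg]
        rintro ⟨ht1, ht2⟩
        omega
    rw [hsum]
    by_cases h0 : i = 0 ∧ j = 0
    · rw [if_pos h0, if_pos ((bez_single_eq_zero i j).mpr h0), if_neg (by omega), add_zero]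
    · rw [if_neg h0, if_neg (fun he => h0 ((bez_single_eq_zero i j).mp he)), zero_add]
end

section
/- (Barnett decomposition formula) Let f = a_0 x^d + ... + a_d ∈ ℚ[x] with d ≥ 1 and a_0 ≠ 0, let X be the companion matrix of f, and let B(1), B(x) be the Bezout matrices of 1 and x. Then X·B(1) = B(x); equivalently, since B(1) is invertible, X = B(x)·B(1)^{-1}. -/
/-!
Write `c n` for the coefficient of `x ^ n` in `f`. Summing the identities
`x ^ (n + 1) - y ^ (n + 1) = (x - y) * ∑_{p + q = n} x ^ p * y ^ q` shows that the coefficient of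
`x ^ i * y ^ j` in `δ(1)` is `c (i + j + 1)`, and `δ(x) = y * δ(1) - f(y)` then gives the entries
of `B(x)`. So `B(1)` is a Hankel matrix that vanishes below its antidiagonal and carries the leading
coefficient `a 0` on it, hence is invertible; and as the companion matrix is a shift plus one
column, `X * B(1) = B(x)` is an entrywise check.
-/

open Polynomial Finset

section CommRing

variable {R S : Type*} [CommRing R] [CommRing S] [Algebra R S]

theorem Polynomial.coeff_sum_C_mul_X_pow_sub (a : ℕ → R) (d n : ℕ) :
    (∑ k ∈ range (d + 1), C (a k) * X ^ (d - k)).coeff n =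
      if n ≤ d then a (d - n) else 0 := by
  rw [← sum_range_reflect, finsetSum_coeff]
  have hterm : ∀ k ∈ range (d + 1),
      (C (a (d + 1 - 1 - k)) * X ^ (d - (d + 1 - 1 - k))).coeff n =
        if n = k then a (d - k) else 0 := by
    intro k hk
    rw [coeff_C_mul_X_pow, Nat.add_sub_cancel, Nat.sub_sub_self (mem_range_succ_iff.mp hk)]
  simp only [sum_congr rfl hterm, sum_ite_eq, mem_range_succ_iff]

theorem sum_antidiagonal_pow_mul_pow_mul_sub (x y : S) (n : ℕ) :
    (∑ p ∈ antidiagonal n, x ^ p.1 * y ^ p.2) * (x - y) = x ^ (n + 1) - y ^ (n + 1) := by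
  rw [Nat.sum_antidiagonal_eq_sum_range_succ_mk, ← geom_sum₂_mul]
  simp

theorem Polynomial.aeval_sub_aeval_eq_sub_mul (f : R[X]) (x y : S) :
    aeval x f - aeval y f =
      (x - y) * ∑ n ∈ range f.natDegree,
        f.coeff (n + 1) • ∑ p ∈ antidiagonal n, x ^ p.1 * y ^ p.2 := by
  rw [aeval_eq_sum_range, aeval_eq_sum_range, ← sum_sub_distrib, sum_range_succ', mul_sum]
  simp only [pow_zero, sub_self, add_zero, ← smul_sub, mul_smul_comm]
  refine sum_congr rfl fun n _ => ?_
  rw [mul_comm, sum_antidiagonal_pow_mul_pow_mul_sub]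

theorem MvPolynomial.coeff_X_zero_pow_mul_X_one_pow (p q i j : ℕ) :
    coeff (Finsupp.single 0 i + Finsupp.single 1 j)
      (X 0 ^ p * X 1 ^ q : MvPolynomial (Fin 2) R) = if (p, q) = (i, j) then 1 else 0 := by
  rw [X_pow_eq_monomial, X_pow_eq_monomial, monomial_mul, one_mul, coeff_monomial]
  exact if_congr (by simp [Finsupp.ext_iff, Fin.forall_fin_two]) rfl rfl

theorem MvPolynomial.coeff_aeval_X_one (f : R[X]) (i j : ℕ) :
    coeff (Finsupp.single 0 i + Finsupp.single 1 j)
      (Polynomial.aeval (X 1 : MvPolynomial (Fin 2) R) f) = if i = 0 then f.coeff j else 0 := by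
  have hX1 (n : ℕ) := coeff_X_zero_pow_mul_X_one_pow (R := R) 0 n i j
  simp only [pow_zero, one_mul, Prod.mk.injEq] at hX1
  rw [aeval_eq_sum_range, coeff_sum]
  rcases eq_or_ne i 0 with rfl | hi
  · simp only [coeff_smul, hX1, true_and, smul_eq_mul, mul_ite, mul_one, mul_zero, sum_ite_eq',
      mem_range, if_true, ite_eq_left_iff, not_lt]
    exact fun hj => (coeff_eq_zero_of_natDegree_lt (by omega)).symm
  · simp only [coeff_smul, hX1, Ne.symm hi, hi, false_and, if_false, smul_zero, sum_const_zero]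

def bezoutMatrixOne (f : R[X]) (d : ℕ) : Matrix (Fin d) (Fin d) R :=
  Matrix.of fun i j => f.coeff (i + j + 1)

def bezoutMatrixX (f : R[X]) (d : ℕ) : Matrix (Fin d) (Fin d) R :=
  Matrix.of fun i j =>
    (if (j : ℕ) = 0 then 0 else f.coeff (i + j)) - if (i : ℕ) = 0 then f.coeff j else 0

variable [IsDomain R]

theorem MvPolynomial.X_zero_sub_X_one_ne_zero : (X 0 - X 1 : MvPolynomial (Fin 2) R) ≠ 0 :=
  sub_ne_zero.mpr (X_injective.ne (by decide))

theorem bezoutOne_coeff {f : R[X]} {δ : MvPolynomial (Fin 2) R}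
    (hδ : (MvPolynomial.X 0 - MvPolynomial.X 1) * δ =
      aeval (MvPolynomial.X 0) f - aeval (MvPolynomial.X 1) f) (i j : ℕ) :
    δ.coeff (Finsupp.single 0 i + Finsupp.single 1 j) = f.coeff (i + j + 1) := by
  rw [aeval_sub_aeval_eq_sub_mul] at hδ
  rw [mul_left_cancel₀ MvPolynomial.X_zero_sub_X_one_ne_zero hδ, MvPolynomial.coeff_sum]
  simp only [MvPolynomial.coeff_smul, MvPolynomial.coeff_sum,
    MvPolynomial.coeff_X_zero_pow_mul_X_one_pow, Prod.mk.eta, sum_ite_eq',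
    HasAntidiagonal.mem_antidiagonal, smul_eq_mul, mul_ite, mul_one, mul_zero,
    eq_comm (a := i + j), mem_range, ite_eq_left_iff, not_lt]
  exact fun h => (coeff_eq_zero_of_natDegree_lt (by omega)).symm

theorem bezoutX_coeff {f : R[X]} {δ₁ δₓ : MvPolynomial (Fin 2) R}
    (hδ₁ : (MvPolynomial.X 0 - MvPolynomial.X 1) * δ₁ =
      aeval (MvPolynomial.X 0) f - aeval (MvPolynomial.X 1) f)
    (hδₓ : (MvPolynomial.X 0 - MvPolynomial.X 1) * δₓ =
      aeval (MvPolynomial.X 0) f * MvPolynomial.X 1 -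
        aeval (MvPolynomial.X 1) f * MvPolynomial.X 0)
    (i j : ℕ) :
    δₓ.coeff (Finsupp.single 0 i + Finsupp.single 1 j) =
      (if j = 0 then 0 else f.coeff (i + j)) - if i = 0 then f.coeff j else 0 := by
  have hδₓ' : δₓ = δ₁ * MvPolynomial.X 1 - aeval (MvPolynomial.X 1) f := by
    refine mul_left_cancel₀ MvPolynomial.X_zero_sub_X_one_ne_zero ?_
    linear_combination hδₓ - MvPolynomial.X 1 * hδ₁
  rw [hδₓ', MvPolynomial.coeff_sub, MvPolynomial.coeff_aeval_X_one]
  congr 1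
  rcases j with _ | j
  · rw [MvPolynomial.coeff_mul_X', if_neg (by simp), if_pos rfl]
  · rw [if_neg j.succ_ne_zero, Finsupp.single_add _ j 1, ← add_assoc, MvPolynomial.coeff_mul_X,
      bezoutOne_coeff hδ₁]
    rfl

theorem Matrix.det_ne_zero_of_eq_zero_of_le_add {d : ℕ} (M : Matrix (Fin d) (Fin d) R)
    (hzero : ∀ i j : Fin d, d ≤ (i : ℕ) + j → M i j = 0)
    (hanti : ∀ i : Fin d, M i i.rev ≠ 0) : M.det ≠ 0 := by
  have htri : (M.submatrix id Fin.revPerm).IsUpperTriangular := by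
    intro i j hij
    refine hzero _ _ ?_
    simp only [id, Fin.revPerm_apply, Fin.val_rev]
    have := j.isLt
    have : (j : ℕ) < i := hij
    omega
  have hdet : (M.submatrix id Fin.revPerm).det ≠ 0 := by
    rw [Matrix.det_of_isUpperTriangular htri]
    exact prod_ne_zero_iff.mpr fun i _ => hanti i
  rw [Matrix.det_permute'] at hdet
  exact right_ne_zero_of_mul hdet

theorem det_bezoutMatrixOne_ne_zero {f : R[X]} {d : ℕ} (hdeg : f.natDegree ≤ d)
    (hlead : f.coeff d ≠ 0) : (bezoutMatrixOne f d).det ≠ 0 := by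
  refine Matrix.det_ne_zero_of_eq_zero_of_le_add _ (fun i j hij => ?_) fun i => ?_
  · exact coeff_eq_zero_of_natDegree_lt (by omega)
  · have := i.isLt
    rwa [bezoutMatrixOne, Matrix.of_apply, Fin.val_rev,
      show (i : ℕ) + (d - (i + 1)) + 1 = d by omega]

end CommRing

section Field

variable {K : Type*} [Field K]

def companion (f : K[X]) (d : ℕ) : Matrix (Fin d) (Fin d) K :=
  Matrix.of fun i j =>
    if (j : ℕ) = d - 1 then -f.coeff i / f.coeff d else if (i : ℕ) = j + 1 then 1 else 0

theorem companion_mul_bezoutMatrixOne {f : K[X]} {d : ℕ} (hdeg : f.natDegree ≤ d)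
    (hlead : f.coeff d ≠ 0) : companion f d * bezoutMatrixOne f d = bezoutMatrixX f d := by
  ext ⟨i, hi⟩ ⟨j, hj⟩
  have hsplit (k : ℕ) : (if k = d - 1 then -f.coeff i / f.coeff d else if i = k + 1 then 1 else 0)
      = (if k = d - 1 then -f.coeff i / f.coeff d else 0) + if k + 1 = i then 1 else 0 := by
    split_ifs <;> first | omega | ring
  simp only [Matrix.mul_apply, companion, bezoutMatrixOne, bezoutMatrixX, Matrix.of_apply,
    hsplit, add_mul, sum_add_distrib, ite_mul, zero_mul, one_mul]
  rw [Fin.sum_univ_eq_sum_range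
      (fun k => if k = d - 1 then -f.coeff i / f.coeff d * f.coeff (k + j + 1) else 0),
    Fin.sum_univ_eq_sum_range (fun k => if k + 1 = i then f.coeff (k + j + 1) else 0),
    sum_ite_eq', if_pos (mem_range.mpr (by omega)), show d - 1 + j + 1 = d + j by omega]
  rcases i with _ | i <;> rcases j with _ | j
  · simp [hlead]
  · simp [coeff_eq_zero_of_natDegree_lt (show f.natDegree < d + (j + 1) by omega)]
  · simp [hlead, show i < d by omega]
  · simp [coeff_eq_zero_of_natDegree_lt (show f.natDegree < d + (j + 1) by omega),
      show i < d by omega, show i + (j + 1) + 1 = i + 1 + (j + 1) by omega]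

end Field

theorem stmt_9_general (d : ℕ) (a : ℕ → ℚ) (ha : a 0 ≠ 0)
    (f : Polynomial ℚ)
    (hf : f = ∑ k ∈ Finset.range (d + 1), C (a k) * Polynomial.X ^ (d - k))
    (X : Matrix (Fin d) (Fin d) ℚ)
    (hX : ∀ i j : Fin d, X i j =
      if (j : ℕ) = d - 1 then -a (d - (i : ℕ)) / a 0
      else if (i : ℕ) = (j : ℕ) + 1 then 1 else 0)
    (δ1 δx : MvPolynomial (Fin 2) ℚ)
    (hδ1 : (MvPolynomial.X 0 - MvPolynomial.X 1) * δ1 =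
      Polynomial.aeval (MvPolynomial.X 0) f - Polynomial.aeval (MvPolynomial.X 1) f)
    (hδx : (MvPolynomial.X 0 - MvPolynomial.X 1) * δx =
      Polynomial.aeval (MvPolynomial.X 0) f * MvPolynomial.X 1
        - Polynomial.aeval (MvPolynomial.X 1) f * MvPolynomial.X 0)
    (B1 Bx : Matrix (Fin d) (Fin d) ℚ)
    (hB1 : ∀ i j : Fin d, B1 i j =
      MvPolynomial.coeff (Finsupp.single 0 (i : ℕ) + Finsupp.single 1 (j : ℕ)) δ1)
    (hBx : ∀ i j : Fin d, Bx i j =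
      MvPolynomial.coeff (Finsupp.single 0 (i : ℕ) + Finsupp.single 1 (j : ℕ)) δx) :
    X * B1 = Bx ∧ X = Bx * B1⁻¹ := by
  have hcoeff (n : ℕ) : f.coeff n = if n ≤ d then a (d - n) else 0 :=
    hf ▸ coeff_sum_C_mul_X_pow_sub a d n
  have hdeg : f.natDegree ≤ d :=
    natDegree_le_iff_coeff_eq_zero.mpr fun N hN => by rw [hcoeff, if_neg (by omega)]
  have hlead : f.coeff d ≠ 0 := by rwa [hcoeff, if_pos le_rfl, Nat.sub_self]
  have hXc : X = companion f d := by
    ext i j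
    simp only [hX, companion, Matrix.of_apply, hcoeff, i.isLt.le, le_refl, if_true, Nat.sub_self]
  have hB1c : B1 = bezoutMatrixOne f d := by
    ext i j
    rw [hB1, bezoutOne_coeff hδ1]
    rfl
  have hBxc : Bx = bezoutMatrixX f d := by
    ext i j
    rw [hBx, bezoutX_coeff hδ1 hδx]
    rfl
  have hmul : X * B1 = Bx := by
    rw [hXc, hB1c, hBxc]
    exact companion_mul_bezoutMatrixOne hdeg hlead
  refine ⟨hmul, ?_⟩
  have hB1det : IsUnit B1.det := (hB1c ▸ det_bezoutMatrixOne_ne_zero hdeg hlead).isUnit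
  rw [← hmul, Matrix.mul_nonsing_inv_cancel_right _ _ hB1det]

/-- Barnett decomposition formula: `X·B(1) = B(x)`, equivalently `X = B(x)·B(1)⁻¹`,
where `X` is the companion matrix of `f` and `B(1), B(x)` its Bezout matrices. -/
theorem stmt_9 (d : ℕ) (hd : 1 ≤ d) (a : ℕ → ℚ) (ha : a 0 ≠ 0)
    (f : Polynomial ℚ)
    (hf : f = ∑ k ∈ Finset.range (d + 1), C (a k) * Polynomial.X ^ (d - k))
    (X : Matrix (Fin d) (Fin d) ℚ)
    (hX : ∀ i j : Fin d, X i j =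
      if (j : ℕ) = d - 1 then -a (d - (i : ℕ)) / a 0
      else if (i : ℕ) = (j : ℕ) + 1 then 1 else 0)
    (δ1 δx : MvPolynomial (Fin 2) ℚ)
    (hδ1 : (MvPolynomial.X 0 - MvPolynomial.X 1) * δ1 =
      Polynomial.aeval (MvPolynomial.X 0) f - Polynomial.aeval (MvPolynomial.X 1) f)
    (hδx : (MvPolynomial.X 0 - MvPolynomial.X 1) * δx =
      Polynomial.aeval (MvPolynomial.X 0) f * MvPolynomial.X 1
        - Polynomial.aeval (MvPolynomial.X 1) f * MvPolynomial.X 0)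
    (B1 Bx : Matrix (Fin d) (Fin d) ℚ)
    (hB1 : ∀ i j : Fin d, B1 i j =
      MvPolynomial.coeff (Finsupp.single 0 (i : ℕ) + Finsupp.single 1 (j : ℕ)) δ1)
    (hBx : ∀ i j : Fin d, Bx i j =
      MvPolynomial.coeff (Finsupp.single 0 (i : ℕ) + Finsupp.single 1 (j : ℕ)) δx) :
    X * B1 = Bx ∧ X = Bx * B1⁻¹ :=
  stmt_9_general d a ha f hf X hX δ1 δx hδ1 hδx B1 Bx hB1 hBx
end

section
/- Let n ≥ 1 and f_1,...,f_n ∈ ℚ[x_1,...,x_n]. For each k ∈ {1,...,n}, the Bezout polynomials satisfy δ(x_k) ≡ x_k·δ(1) modulo the ideal of R = ℚ[x_1,...,x_n,y_1,...,y_n] generated by f_1,...,f_n (regarded as polynomials in the x-variables); that is, det Δ(x_k) - x_k·det Δ(1) lies in the ideal ⟨f_1(x),...,f_n(x)⟩ of R. -/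
/-!
Write `φ m` for the column `(fᵢ(y₁,…,y_m,x_{m+1},…,xₙ))ᵢ`, so that `φ 0` is `(fᵢ(x))ᵢ` and the
`j`-th column of `Δ(1)`, multiplied by `xⱼ - yⱼ`, is `φ j - φ (j+1)`. Cancelling `x_k - y_k`, the
matrix `Δ(x_k)` is `Δ(1)` with its `k`-th column replaced by `x_k · Δ(1)_{·k} - φ k`; hence
`δ(x_k) - x_k δ(1) = -det(Δ(1) with column k replaced by φ k)`. Subtracting the multiples
`(xⱼ - yⱼ) Δ(1)_{·j}`, `j < k`, of the other columns turns `φ k` into `φ 0`, whose entries lie in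
the ideal, and so does the determinant by expansion along that column.
-/

open MvPolynomial

namespace Matrix

variable {R : Type*} [CommRing R]

theorem det_updateCol_mem_of_forall_mem {n : Type*} [Fintype n] [DecidableEq n] (I : Ideal R)
    (A : Matrix n n R) (j : n) {v : n → R} (hv : ∀ i, v i ∈ I) : (A.updateCol j v).det ∈ I := by
  rw [← cramer_apply, cramer_eq_adjugate_mulVec]
  exact Ideal.sum_mem _ fun i _ => I.mul_mem_left _ (hv i)

variable {n : ℕ}

theorem det_updateCol_telescope (A : Matrix (Fin n) (Fin n) R) (k : Fin n) (φ : ℕ → Fin n → R)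
    (d : Fin n → R) (hstep : ∀ i, ∀ j < k, d j * A i j = φ j i - φ (j + 1) i) :
    (A.updateCol k (φ k)).det = (A.updateCol k (φ 0)).det := by
  suffices h : ∀ m ≤ (k : ℕ), (A.updateCol k (φ m)).det = (A.updateCol k (φ 0)).det from
    h k le_rfl
  intro m hm
  induction m with
  | zero => rfl
  | succ m ih =>
    set j : Fin n := ⟨m, by omega⟩
    have hjk : j < k := Fin.mk_lt_of_lt_val hm
    set A' := A.updateCol k (φ m)
    have hcol : A.updateCol k (φ (m + 1)) = A'.updateCol k fun i => A' i k + (-d j) • A' i j := by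
      rw [updateCol_idem]
      congr 1
      funext i
      simp only [A', updateCol_self, updateCol_ne hjk.ne, smul_eq_mul]
      linear_combination hstep i j hjk
    rw [hcol, det_updateCol_add_smul_self _ hjk.ne', ih (by omega)]

theorem bezoutMatrix_eq_updateCol [IsDomain R] {A B : Matrix (Fin n) (Fin n) R} {k : Fin n}
    {x y : Fin n → R} {φ : ℕ → Fin n → R} (hxy : ∀ j, x j ≠ y j)
    (hA : ∀ i j, (x j - y j) * A i j = φ j i - φ (j + 1) i)
    (hB : ∀ i j, (x j - y j) * B i j =
      y j ^ (if j = k then 1 else 0) * φ j i - x j ^ (if j = k then 1 else 0) * φ (j + 1) i) :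
    B = A.updateCol k fun i => x k * A i k - φ k i := by
  ext i j
  refine mul_left_cancel₀ (sub_ne_zero.mpr (hxy j)) ?_
  rw [hB]
  by_cases hjk : j = k
  · subst hjk
    simp only [updateCol_self, if_true, pow_one]
    linear_combination -x j * hA i j
  · simp only [updateCol_ne hjk, if_neg hjk, pow_zero, one_mul, hA]

theorem det_bezoutMatrix_sub_mem [IsDomain R] (I : Ideal R) {A B : Matrix (Fin n) (Fin n) R}
    {k : Fin n} {x y : Fin n → R} {φ : ℕ → Fin n → R} (hxy : ∀ j, x j ≠ y j)
    (hA : ∀ i j, (x j - y j) * A i j = φ j i - φ (j + 1) i)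
    (hB : ∀ i j, (x j - y j) * B i j =
      y j ^ (if j = k then 1 else 0) * φ j i - x j ^ (if j = k then 1 else 0) * φ (j + 1) i)
    (hφ : ∀ i, φ 0 i ∈ I) :
    B.det - x k * A.det ∈ I := by
  have hcol : (fun i => x k * A i k - φ k i) = x k • (fun i => A i k) + (-1 : R) • φ k := by
    funext i
    simp only [Pi.add_apply, Pi.smul_apply, smul_eq_mul]
    ring
  have hdet : B.det - x k * A.det = -(A.updateCol k (φ k)).det := by
    rw [bezoutMatrix_eq_updateCol hxy hA hB, hcol, det_updateCol_add, det_updateCol_smul,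
      det_updateCol_smul, updateCol_eq_self]
    ring
  rw [hdet, det_updateCol_telescope A k φ (fun j => x j - y j) fun i j _ => hA i j]
  exact I.neg_mem (det_updateCol_mem_of_forall_mem I A k hφ)

end Matrix

theorem stmt_13_general (n : ℕ) (f : Fin n → MvPolynomial (Fin n) ℚ) (k : Fin n)
    (D0 Dk : Matrix (Fin n) (Fin n) (MvPolynomial (Fin n ⊕ Fin n) ℚ))
    (hD0 : ∀ i j : Fin n,
      (X (Sum.inl j) - X (Sum.inr j)) * D0 i j =
        (aeval (fun t : Fin n =>
          if (t : ℕ) < (j : ℕ) then (X (Sum.inr t) : MvPolynomial (Fin n ⊕ Fin n) ℚ)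
          else X (Sum.inl t)) (f i))
        - (aeval (fun t : Fin n =>
          if (t : ℕ) ≤ (j : ℕ) then (X (Sum.inr t) : MvPolynomial (Fin n ⊕ Fin n) ℚ)
          else X (Sum.inl t)) (f i)))
    (hDk : ∀ i j : Fin n,
      (X (Sum.inl j) - X (Sum.inr j)) * Dk i j =
        (X (Sum.inr j)) ^ (if j = k then 1 else 0) *
          (aeval (fun t : Fin n =>
            if (t : ℕ) < (j : ℕ) then (X (Sum.inr t) : MvPolynomial (Fin n ⊕ Fin n) ℚ)
            else X (Sum.inl t)) (f i))
        - (X (Sum.inl j)) ^ (if j = k then 1 else 0) *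
          (aeval (fun t : Fin n =>
            if (t : ℕ) ≤ (j : ℕ) then (X (Sum.inr t) : MvPolynomial (Fin n ⊕ Fin n) ℚ)
            else X (Sum.inl t)) (f i))) :
    Dk.det - X (Sum.inl k) * D0.det ∈
      Ideal.span (Set.range fun i : Fin n => rename Sum.inl (f i)) := by
  let φ : ℕ → Fin n → MvPolynomial (Fin n ⊕ Fin n) ℚ := fun m i =>
    aeval (fun t : Fin n => if (t : ℕ) < m then X (Sum.inr t) else X (Sum.inl t)) (f i)
  have hA : ∀ i j : Fin n, (X (Sum.inl j) - X (Sum.inr j)) * D0 i j = φ j i - φ (j + 1) i := by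
    simpa only [φ, Nat.lt_add_one_iff] using hD0
  have hB : ∀ i j : Fin n, (X (Sum.inl j) - X (Sum.inr j)) * Dk i j =
      X (Sum.inr j) ^ (if j = k then 1 else 0) * φ j i -
        X (Sum.inl j) ^ (if j = k then 1 else 0) * φ (j + 1) i := by
    simpa only [φ, Nat.lt_add_one_iff] using hDk
  have hφ : ∀ i, φ 0 i ∈ Ideal.span (Set.range fun i : Fin n => rename Sum.inl (f i)) := by
    intro i
    simpa [φ, rename_eq_aeval, Function.comp_def] using
      Ideal.subset_span (Set.mem_range_self (f := fun i => rename Sum.inl (f i)) i)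
  exact Matrix.det_bezoutMatrix_sub_mem (x := fun j => X (Sum.inl j)) (y := fun j => X (Sum.inr j))
    _ (fun j h => Sum.inl_ne_inr (X_injective h)) hA hB hφ

/-- For each `k`, the Bezout polynomials satisfy `δ(x_k) ≡ x_k·δ(1)` modulo the ideal of
`R = ℚ[x₁,…,xₙ,y₁,…,yₙ]` generated by `f₁(x),…,fₙ(x)`; i.e.
`det Δ(x_k) - x_k·det Δ(1) ∈ ⟨f₁(x),…,fₙ(x)⟩`. (The `x`-variables are indexed by
`Sum.inl` and the `y`-variables by `Sum.inr`; `Δ(1)` and `Δ(x_k)` are given by their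
defining equations.) -/
theorem stmt_13 (n : ℕ) (hn : 1 ≤ n) (f : Fin n → MvPolynomial (Fin n) ℚ) (k : Fin n)
    (D0 Dk : Matrix (Fin n) (Fin n) (MvPolynomial (Fin n ⊕ Fin n) ℚ))
    (hD0 : ∀ i j : Fin n,
      (X (Sum.inl j) - X (Sum.inr j)) * D0 i j =
        (aeval (fun t : Fin n =>
          if (t : ℕ) < (j : ℕ) then (X (Sum.inr t) : MvPolynomial (Fin n ⊕ Fin n) ℚ)
          else X (Sum.inl t)) (f i))
        - (aeval (fun t : Fin n =>
          if (t : ℕ) ≤ (j : ℕ) then (X (Sum.inr t) : MvPolynomial (Fin n ⊕ Fin n) ℚ)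
          else X (Sum.inl t)) (f i)))
    (hDk : ∀ i j : Fin n,
      (X (Sum.inl j) - X (Sum.inr j)) * Dk i j =
        (X (Sum.inr j)) ^ (if j = k then 1 else 0) *
          (aeval (fun t : Fin n =>
            if (t : ℕ) < (j : ℕ) then (X (Sum.inr t) : MvPolynomial (Fin n ⊕ Fin n) ℚ)
            else X (Sum.inl t)) (f i))
        - (X (Sum.inl j)) ^ (if j = k then 1 else 0) *
          (aeval (fun t : Fin n =>
            if (t : ℕ) ≤ (j : ℕ) then (X (Sum.inr t) : MvPolynomial (Fin n ⊕ Fin n) ℚ)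
            else X (Sum.inl t)) (f i))) :
    Dk.det - X (Sum.inl k) * D0.det ∈
      Ideal.span (Set.range fun i : Fin n => rename Sum.inl (f i)) :=
  stmt_13_general n f k D0 Dk hD0 hDk
end

section
/- Let n ≥ 1 and f_1,...,f_n ∈ ℚ[x_1,...,x_n], and suppose d_1,...,d_n ≥ 1 are such that for all i, j the partial degree of f_i in the variable x_j is at most d_j. Then for each k ∈ {0,1,...,n} (with x_0 = 1), the Bezout polynomial δ(x_k) has partial degree in x_j at most j·d_j and partial degree in y_j at most (n - j + 1)·d_j, for every j ∈ {1,...,n}. -/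
/-!
Each entry `δ_ij` of `Δ(x^γ)` is `N_ij(x^γ)` divided by `x_j - y_j`, which cannot raise a
partial degree. In `N_ij` the variable `x_l` survives the substitutions only for `j ≤ l`, with
degree at most `d_l` (the factor `x_j^{γ_j}` contributes at most `1 ≤ d_j`), and `y_l` only for
`l ≤ j`. Every term of the Leibniz expansion of the determinant takes one entry from each
column `j`, so its `x_l`-degree is at most `l·d_l` and its `y_l`-degree at most `(n-l+1)·d_l`.
-/

open MvPolynomial

section MixedVariables

variable {σ R : Type*} [CommSemiring R]

def mixedVars (P : σ → Prop) [DecidablePred P] (t : σ) : σ ⊕ σ :=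
  if P t then .inr t else .inl t

variable (P : σ → Prop) [DecidablePred P]

lemma mixedVars_injective : Function.Injective (mixedVars P) := by
  intro a b h
  unfold mixedVars at h
  split_ifs at h <;> simpa using h

lemma aeval_ite_X_eq_rename_mixedVars (p : MvPolynomial σ R) :
    aeval (fun t => if P t then (X (.inr t) : MvPolynomial (σ ⊕ σ) R) else X (.inl t)) p =
      rename (mixedVars P) p := by
  rw [rename_eq_aeval]
  congr 2
  funext t
  exact (apply_ite X _ _ _).symm

lemma degreeOf_rename_eq_zero_of_notMem_range {τ : Type*} {f : σ → τ} {w : τ}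
    (hw : w ∉ Set.range f) (p : MvPolynomial σ R) : degreeOf w (rename f p) = 0 := by
  classical
  by_contra h
  obtain ⟨t, -, rfl⟩ := mem_vars_rename f p (mem_vars_iff_degreeOf_ne_zero.mpr h)
  exact hw ⟨t, rfl⟩

lemma degreeOf_inl_rename_mixedVars (p : MvPolynomial σ R) (t : σ) :
    degreeOf (.inl t) (rename (mixedVars P) p) = if P t then 0 else degreeOf t p := by
  split_ifs with ht
  · refine degreeOf_rename_eq_zero_of_notMem_range ?_ p
    rintro ⟨s, hs⟩
    unfold mixedVars at hs
    split_ifs at hs with hs'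
    exact hs' (Sum.inl_injective hs ▸ ht)
  · rw [← degreeOf_rename_of_injective (mixedVars_injective P), mixedVars, if_neg ht]

lemma degreeOf_inr_rename_mixedVars (p : MvPolynomial σ R) (t : σ) :
    degreeOf (.inr t) (rename (mixedVars P) p) = if P t then degreeOf t p else 0 := by
  split_ifs with ht
  · rw [← degreeOf_rename_of_injective (mixedVars_injective P), mixedVars, if_pos ht]
  · refine degreeOf_rename_eq_zero_of_notMem_range ?_ p
    rintro ⟨s, hs⟩
    unfold mixedVars at hs
    split_ifs at hs with hs'
    exact ht (Sum.inr_injective hs ▸ hs')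

end MixedVariables

lemma degreeOf_X_pow {σ R : Type*} [CommSemiring R] [Nontrivial R] [DecidableEq σ]
    (v w : σ) (e : ℕ) : degreeOf v (X w ^ e : MvPolynomial σ R) = if v = w then e else 0 := by
  split_ifs with h
  · rw [h, degreeOf_X_self_pow]
  · exact degreeOf_X_pow_of_ne e h

lemma degreeOf_le_of_mul_eq {σ R : Type*} [CommSemiring R] [NoZeroDivisors R]
    {q p r : MvPolynomial σ R} (hq : q ≠ 0) (h : q * p = r) (v : σ) :
    degreeOf v p ≤ degreeOf v r := by
  rcases eq_or_ne p 0 with rfl | hp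
  · simp
  · rw [← h, degreeOf_mul_eq hq hp]
    exact Nat.le_add_left _ _

lemma degreeOf_det_le {σ ι R : Type*} [CommRing R] [Fintype ι] [DecidableEq ι]
    (A : Matrix ι ι (MvPolynomial σ R)) (v : σ) (b : ι → ℕ)
    (hb : ∀ i j, degreeOf v (A i j) ≤ b j) : degreeOf v A.det ≤ ∑ j, b j := by
  rw [Matrix.det_apply']
  refine (degreeOf_sum_le _ _ _).trans (Finset.sup_le fun τ _ => ?_)
  refine (degreeOf_mul_le _ _ _).trans ?_
  rw [← map_intCast (C : R →+* MvPolynomial σ R), degreeOf_C, zero_add]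
  exact (degreeOf_prod_le _ _ _).trans (Finset.sum_le_sum fun j _ => hb (τ j) j)

section BezoutNumerator

variable {σ R : Type*} [CommRing R] [LinearOrder σ]

/-- `N_ij(x^γ)` for `g = f_i`, `a = j`, `e = γ_j`: renaming along `mixedVars (· < a)` is the
substitution `g(y_1,…,y_{a-1},x_a,…,x_n)`. -/
noncomputable def bezoutNumerator (g : MvPolynomial σ R) (e : ℕ) (a : σ) : MvPolynomial (σ ⊕ σ) R :=
  X (.inr a) ^ e * rename (mixedVars (· < a)) g - X (.inl a) ^ e * rename (mixedVars (· ≤ a)) g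

variable [Nontrivial R] {g : MvPolynomial σ R} {e d : ℕ} {a b : σ}

lemma degreeOf_inl_bezoutNumerator_le (hg : degreeOf b g ≤ d) (he : e ≤ d) :
    degreeOf (.inl b) (bezoutNumerator g e a) ≤ if a ≤ b then d else 0 := by
  classical
  refine (degreeOf_sub_le _ _ _).trans (max_le ?_ ?_) <;> refine (degreeOf_mul_le _ _ _).trans ?_
  all_goals
    simp only [degreeOf_X_pow, degreeOf_inl_rename_mixedVars, Sum.inl.injEq, reduceCtorEq, if_false]
    split_ifs <;> first | omega | (exfalso; order)

lemma degreeOf_inr_bezoutNumerator_le (hg : degreeOf b g ≤ d) (he : e ≤ d) :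
    degreeOf (.inr b) (bezoutNumerator g e a) ≤ if b ≤ a then d else 0 := by
  classical
  refine (degreeOf_sub_le _ _ _).trans (max_le ?_ ?_) <;> refine (degreeOf_mul_le _ _ _).trans ?_
  all_goals
    simp only [degreeOf_X_pow, degreeOf_inr_rename_mixedVars, Sum.inr.injEq, reduceCtorEq, if_false]
    split_ifs <;> first | omega | (exfalso; order)

end BezoutNumerator

/-- Indices are 0-based (`j : Fin n` is the paper's `j + 1`); the `x`-variables are the
`Sum.inl`, the `y`-variables the `Sum.inr`. -/
theorem stmt_14_general (n : ℕ) (f : Fin n → MvPolynomial (Fin n) ℚ)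
    (d : Fin n → ℕ) (hd : ∀ j : Fin n, 1 ≤ d j)
    (hdeg : ∀ i j : Fin n, degreeOf j (f i) ≤ d j)
    (k : Fin (n + 1)) (γ : Fin n → ℕ) (hγ : ∀ j : Fin n, γ j = if (j : ℕ) + 1 = (k : ℕ) then 1 else 0)
    (D : Matrix (Fin n) (Fin n) (MvPolynomial (Fin n ⊕ Fin n) ℚ))
    (hD : ∀ i j : Fin n,
      (X (Sum.inl j) - X (Sum.inr j)) * D i j =
        (X (Sum.inr j)) ^ (γ j) *
          (aeval (fun t : Fin n =>
            if (t : ℕ) < (j : ℕ) then (X (Sum.inr t) : MvPolynomial (Fin n ⊕ Fin n) ℚ)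
            else X (Sum.inl t)) (f i))
        - (X (Sum.inl j)) ^ (γ j) *
          (aeval (fun t : Fin n =>
            if (t : ℕ) ≤ (j : ℕ) then (X (Sum.inr t) : MvPolynomial (Fin n ⊕ Fin n) ℚ)
            else X (Sum.inl t)) (f i))) :
    ∀ j : Fin n,
      degreeOf (Sum.inl j) D.det ≤ ((j : ℕ) + 1) * d j ∧
      degreeOf (Sum.inr j) D.det ≤ (n - (j : ℕ)) * d j := by
  have hγd : ∀ j j', γ j' ≤ d j := fun j j' =>
    le_trans (by rw [hγ j']; split_ifs <;> simp) (hd j)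
  have hentry : ∀ v i j, degreeOf v (D i j) ≤ degreeOf v (bezoutNumerator (f i) (γ j) j) := by
    intro v i j
    have hN : (X (Sum.inl j) - X (Sum.inr j)) * D i j = bezoutNumerator (f i) (γ j) j := by
      rw [hD, aeval_ite_X_eq_rename_mixedVars, aeval_ite_X_eq_rename_mixedVars]
      rfl
    exact degreeOf_le_of_mul_eq (sub_ne_zero.mpr (X_injective.ne Sum.inl_ne_inr)) hN v
  intro j
  constructor
  · calc degreeOf (Sum.inl j) D.det ≤ ∑ j' : Fin n, if j' ≤ j then d j else 0 :=
          degreeOf_det_le D _ _ fun i j' =>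
            (hentry _ i j').trans (degreeOf_inl_bezoutNumerator_le (hdeg i j) (hγd j j'))
      _ = ((j : ℕ) + 1) * d j := by
          rw [Finset.sum_ite, Finset.sum_const_zero, add_zero, Finset.sum_const,
            Finset.filter_ge_eq_Iic, Fin.card_Iic, smul_eq_mul]
  · calc degreeOf (Sum.inr j) D.det ≤ ∑ j' : Fin n, if j ≤ j' then d j else 0 :=
          degreeOf_det_le D _ _ fun i j' =>
            (hentry _ i j').trans (degreeOf_inr_bezoutNumerator_le (hdeg i j) (hγd j j'))
      _ = (n - (j : ℕ)) * d j := by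
          rw [Finset.sum_ite, Finset.sum_const_zero, add_zero, Finset.sum_const,
            Finset.filter_le_eq_Ici, Fin.card_Ici, smul_eq_mul]

/-- If each `f_i` has partial degree at most `d_j` in `x_j`, then for each
`k ∈ {0,1,…,n}` (with `x₀ = 1`), the Bezout polynomial `δ(x_k) = det Δ(x_k)` has partial
degree in `x_j` at most `j·d_j` and partial degree in `y_j` at most `(n - j + 1)·d_j`
(indices `j` written 1-based; here `j : Fin n` is 0-based, so the bounds read
`(j+1)·d_j` and `(n-j)·d_j`). The `x`-variables are indexed by `Sum.inl`, the
`y`-variables by `Sum.inr`, and `k = 0` corresponds to the zero exponent vector. -/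
theorem stmt_14 (n : ℕ) (hn : 1 ≤ n) (f : Fin n → MvPolynomial (Fin n) ℚ)
    (d : Fin n → ℕ) (hd : ∀ j : Fin n, 1 ≤ d j)
    (hdeg : ∀ i j : Fin n, degreeOf j (f i) ≤ d j)
    (k : Fin (n + 1)) (γ : Fin n → ℕ) (hγ : ∀ j : Fin n, γ j = if (j : ℕ) + 1 = (k : ℕ) then 1 else 0)
    (D : Matrix (Fin n) (Fin n) (MvPolynomial (Fin n ⊕ Fin n) ℚ))
    (hD : ∀ i j : Fin n,
      (X (Sum.inl j) - X (Sum.inr j)) * D i j =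
        (X (Sum.inr j)) ^ (γ j) *
          (aeval (fun t : Fin n =>
            if (t : ℕ) < (j : ℕ) then (X (Sum.inr t) : MvPolynomial (Fin n ⊕ Fin n) ℚ)
            else X (Sum.inl t)) (f i))
        - (X (Sum.inl j)) ^ (γ j) *
          (aeval (fun t : Fin n =>
            if (t : ℕ) ≤ (j : ℕ) then (X (Sum.inr t) : MvPolynomial (Fin n ⊕ Fin n) ℚ)
            else X (Sum.inl t)) (f i))) :
    ∀ j : Fin n,
      degreeOf (Sum.inl j) D.det ≤ ((j : ℕ) + 1) * d j ∧
      degreeOf (Sum.inr j) D.det ≤ (n - (j : ℕ)) * d j :=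
  stmt_14_general n f d hd hdeg k γ hγ D hD
end

section
/- Let n ≥ 1, let I be an ideal of ℂ[x_1,...,x_n] such that the quotient algebra A = ℂ[x_1,...,x_n]/I is a nonzero finite-dimensional ℂ-vector space, and let α = (α_1,...,α_n) ∈ ℂ^n satisfy p(α) = 0 for every p ∈ I. Then for each j ∈ {1,...,n}, the complex number α_j is an eigenvalue of the ℂ-linear multiplication map X_j : A → A, h ↦ x_j·h. -/
open MvPolynomial

set_option synthInstance.maxHeartbeats 1000000 in
/-- If `A = ℂ[x₁,…,xₙ]/I` is a nonzero finite-dimensional `ℂ`-vector space and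
`α ∈ ℂⁿ` is a common root of all the polynomials of `I`, then each `α_j` is an
eigenvalue of the multiplication map `X_j : A → A`, `h ↦ x_j·h`. -/
theorem stmt_16 (n : ℕ) (hn : 1 ≤ n) (I : Ideal (MvPolynomial (Fin n) ℂ))
    (hfin : FiniteDimensional ℂ (MvPolynomial (Fin n) ℂ ⧸ I))
    (hnz : Nontrivial (MvPolynomial (Fin n) ℂ ⧸ I))
    (α : Fin n → ℂ) (hα : ∀ p ∈ I, eval α p = 0) (j : Fin n) :
    Module.End.HasEigenvalue
      (LinearMap.mulLeft ℂ (Ideal.Quotient.mk I (X j))) (α j) := by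
  set A := MvPolynomial (Fin n) ℂ ⧸ I
  set a : A := Ideal.Quotient.mk I (X j)
  by_contra h
  rw [Module.End.hasEigenvalue_iff_mem_spectrum, spectrum.notMem_iff] at h
  have hbij : Function.Bijective
      ((algebraMap ℂ (Module.End ℂ A) (α j) - LinearMap.mulLeft ℂ a) : A → A) :=
    Module.End.isUnit_iff _ |>.mp h
  obtain ⟨b, hb⟩ := hbij.surjective 1
  -- evaluation map A → ℂ
  let φ : A →+* ℂ := Ideal.Quotient.lift I (eval α) hα
  have hb' : algebraMap ℂ A (α j) * b - a * b = 1 := by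
    rw [← Algebra.smul_def]; simpa [Module.algebraMap_end_apply] using hb
  have := congrArg φ hb'
  have hφa : φ a = α j := by
    show φ (Ideal.Quotient.mk I (X j)) = α j
    rw [Ideal.Quotient.lift_mk, eval_X]
  have hφc : φ (algebraMap ℂ A (α j)) = α j := by
    show φ (Ideal.Quotient.mk I (C (α j))) = α j
    rw [Ideal.Quotient.lift_mk, eval_C]
  rw [map_sub, map_mul, map_mul, map_one, hφa, hφc, sub_self] at this
  exact zero_ne_one this
end

section
/- Let n ≥ 1, let I be an ideal of ℂ[x_1,...,x_n] and let A = ℂ[x_1,...,x_n]/I. Suppose v ∈ A is nonzero and α = (α_1,...,α_n) ∈ ℂ^n is such that X_j(v) = α_j·v for every j ∈ {1,...,n}, where X_j is the multiplication-by-x_j map on A. Then p(α) = 0 for every p ∈ I; that is, common eigenvectors of the multiplication maps yield common roots of the ideal. -/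
open MvPolynomial

set_option synthInstance.maxHeartbeats 1000000 in
/-- If `v ≠ 0` in `A = ℂ[x₁,…,xₙ]/I` is a common eigenvector of the multiplication maps
`X_j` with eigenvalues `α_j`, then `α = (α₁,…,αₙ)` is a common root of all the
polynomials of `I`. -/
theorem stmt_17 (n : ℕ) (hn : 1 ≤ n) (I : Ideal (MvPolynomial (Fin n) ℂ))
    (v : MvPolynomial (Fin n) ℂ ⧸ I) (hv : v ≠ 0) (α : Fin n → ℂ)
    (hev : ∀ j : Fin n,
      LinearMap.mulLeft ℂ (Ideal.Quotient.mk I (X j)) v = α j • v) :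
    ∀ p ∈ I, eval α p = 0 := by
  have key : ∀ p : MvPolynomial (Fin n) ℂ,
      (Ideal.Quotient.mk I p) * v = (eval α p) • v := by
    intro p
    induction p using MvPolynomial.induction_on with
    | C a =>
        rw [eval_C, show ((Ideal.Quotient.mk I) (C a) : MvPolynomial (Fin n) ℂ ⧸ I)
          = algebraMap ℂ _ a from rfl, ← Algebra.smul_def]
    | add p q hp hq =>
        simp [map_add, add_mul, hp, hq, add_smul]
    | mul_X p j hp =>
        have := hev j
        simp only [LinearMap.mulLeft_apply] at this
        calc (Ideal.Quotient.mk I (p * X j)) * v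
            = (Ideal.Quotient.mk I (X j)) * ((Ideal.Quotient.mk I p) * v) := by
              rw [map_mul]; ring
          _ = (Ideal.Quotient.mk I (X j)) * ((eval α p) • v) := by rw [hp]
          _ = (eval α p) • ((Ideal.Quotient.mk I (X j)) * v) := by
              rw [mul_smul_comm]
          _ = (eval α p) • ((α j) • v) := by rw [this]
          _ = (eval α (p * X j)) • v := by
              rw [smul_smul, eval_mul, eval_X]
  intro p hp
  have h0 : (Ideal.Quotient.mk I p) = 0 := (Ideal.Quotient.eq_zero_iff_mem).2 hp
  have := key p
  rw [h0, zero_mul] at this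
  rcases smul_eq_zero.1 this.symm with h | h
  · exact h
  · exact absurd h hv
end
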